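/- arXiv:1512.08262 — 4 statements merged into one kernel-verified Lean document; each statement's English description precedes it below -/
import Mathlib

section
/- Let θ₀ ∈ (0, π/2), β ∈ (0,1) and c > 0. Then there exists a constant C > 0, depending only on (θ₀, β, c), such that the following holds: for every function ψ : ℂ → ℝ that is continuous on the closed unit disc 𝔻̄ and satisfies the sub-mean value inequality ψ(z) ≤ (1/(2π)) ∫₀^{2π} ψ(z + r e^{it}) dt for every z ∈ 𝔻 and every r > 0 such that the closed ball of radius r about z is contained in 𝔻 (i.e. ψ is subharmonic on 𝔻), if ψ(e^{iθ}) ≤ c|θ|^β for all θ ∈ (−θ₀, θ₀) and ψ(e^{iθ}) ≤ c for all θ ∈ [−π, π], then ψ(z) ≤ C|1 − z|^β for every z ∈ 𝔻. -/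
/-!
The barrier `u w = Re ((1 - w) ^ β)` is harmonic on the disc, and since `Re (1 - w) ≥ 0` there,
`cos (β π / 2) ‖1 - w‖ ^ β ≤ u w ≤ ‖1 - w‖ ^ β`. Jordan's inequality `‖1 - e^{iθ}‖ ≥ (2 / π) |θ|`
turns the two boundary hypotheses into `ψ ≤ K ‖1 - w‖ ^ β ≤ C u` on the unit circle. The sub-mean
value property is preserved by subtracting `C u`, and a maximum principle for it (proved by adding
`ε ‖w‖ ^ 2`, which makes the sub-mean value inequality strict and so rules out interior maxima)
gives `ψ ≤ C u ≤ C ‖1 - z‖ ^ β` in the disc.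
-/

open Metric Real

theorem circleAverage_re_eq_of_differentiableOn {f : ℂ → ℂ} {U : Set ℂ} {c : ℂ} {R : ℝ}
    (hf : DifferentiableOn ℂ f U) (hc : closedBall c |R| ⊆ U) :
    circleAverage (fun w => (f w).re) c R = (f c).re := by
  rw [← (hf.diffContOnCl_ball hc).circleAverage]
  exact Complex.reCLM.circleAverage_comp_comm
    (hf.continuousOn.mono (sphere_subset_closedBall.trans hc)).circleIntegrable'

-- On the circle, `‖w‖ ^ 2 - ‖c‖ ^ 2 - R ^ 2` is the harmonic function `Re (2 c̄ (w - c))`.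
theorem circleAverage_norm_sq (c : ℂ) (R : ℝ) :
    circleAverage (fun w => ‖w‖ ^ 2) c R = ‖c‖ ^ 2 + R ^ 2 := by
  have hsphere : Set.EqOn (fun w => ‖w‖ ^ 2)
      (fun w => (‖c‖ ^ 2 + R ^ 2) + (2 * (starRingEnd ℂ) c * (w - c)).re) (sphere c |R|) := by
    intro w hw
    have hR : ‖w - c‖ ^ 2 = R ^ 2 := by rw [← dist_eq_norm, mem_sphere.1 hw, sq_abs]
    simp only [Complex.sq_norm, Complex.normSq_apply] at hR ⊢
    simp only [Complex.mul_re, Complex.mul_im, Complex.sub_re, Complex.sub_im, Complex.conj_re,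
      Complex.conj_im, Complex.re_ofNat, Complex.im_ofNat] at hR ⊢
    linear_combination hR
  rw [circleAverage_congr_sphere hsphere, circleAverage_fun_add (circleIntegrable_const _ _ _)
    (by fun_prop), circleAverage_const,
    circleAverage_re_eq_of_differentiableOn (U := Set.univ) (by fun_prop) (Set.subset_univ _)]
  simp

theorem re_cpow_le_rpow (ζ : ℂ) (β : ℝ) : (ζ ^ (β : ℂ)).re ≤ ‖ζ‖ ^ β :=
  (Complex.re_le_norm _).trans_eq (Complex.norm_cpow_real ζ β)

theorem cos_mul_rpow_le_re_cpow {β : ℝ} (hβ0 : 0 ≤ β) (hβ2 : β ≤ 2) {ζ : ℂ} (hζ : 0 ≤ ζ.re) :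
    cos (β * (π / 2)) * ‖ζ‖ ^ β ≤ (ζ ^ (β : ℂ)).re := by
  rw [Complex.cpow_ofReal_re, mul_comm]
  gcongr
  have harg : |Complex.arg ζ * β| ≤ β * (π / 2) := by
    rw [abs_mul, abs_of_nonneg hβ0, mul_comm]
    gcongr
    exact Complex.abs_arg_le_pi_div_two_iff.2 hζ
  rw [← cos_abs (Complex.arg ζ * β)]
  exact cos_le_cos_of_nonneg_of_le_pi (abs_nonneg _) (by nlinarith [pi_pos]) harg

theorem mul_abs_le_norm_one_sub_exp {θ : ℝ} (hθ : |θ| ≤ π) :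
    2 / π * |θ| ≤ ‖1 - Complex.exp (θ * Complex.I)‖ := by
  rw [norm_sub_rev, mul_comm (θ : ℂ), Complex.norm_exp_I_mul_ofReal_sub_one, norm_mul,
    Real.norm_eq_abs, Real.norm_eq_abs, abs_two]
  have := mul_abs_le_abs_sin (x := θ / 2) (by rw [abs_div, abs_two]; linarith)
  rw [abs_div, abs_two] at this
  linarith

-- For `φ` continuous on an open set `U`, this is subharmonicity of `φ` on `U`.
def SubMeanValueOn (φ : ℂ → ℝ) (U : Set ℂ) : Prop :=
  ∀ z ∈ U, ∀ r : ℝ, 0 < r → closedBall z r ⊆ U → φ z ≤ circleAverage φ z r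

namespace SubMeanValueOn

variable {φ : ℂ → ℝ} {U : Set ℂ}

theorem sub_mul_re (hφ : SubMeanValueOn φ U) (hφc : ContinuousOn φ U) {f : ℂ → ℂ}
    (hf : DifferentiableOn ℂ f U) (a : ℝ) : SubMeanValueOn (fun w => φ w - a * (f w).re) U := by
  intro z hz r hr hball
  have hball' : closedBall z |r| ⊆ U := by rwa [abs_of_pos hr]
  have hsphere : sphere z |r| ⊆ U := sphere_subset_closedBall.trans hball'
  have hmean := circleAverage_re_eq_of_differentiableOn (hf.const_mul (a : ℂ)) hball'
  simp only [Complex.re_ofReal_mul] at hmean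
  have hreint : CircleIntegrable (fun w => a * (f w).re) z r :=
    (continuousOn_const.mul
      (Complex.continuous_re.comp_continuousOn (hf.continuousOn.mono hsphere))).circleIntegrable'
  show φ z - a * (f z).re ≤ _
  rw [circleAverage_fun_sub (hφc.mono hsphere).circleIntegrable' hreint, hmean]
  linarith [hφ z hz r hr hball]

theorem exists_mem_frontier_isMaxOn (hφ : SubMeanValueOn φ U) (hb : Bornology.IsBounded U)
    (hc : ContinuousOn φ (closure U)) (hne : U.Nonempty) {ε : ℝ} (hε : 0 < ε) :
    ∃ x ∈ frontier U, IsMaxOn (fun w => φ w + ε * ‖w‖ ^ 2) (closure U) x := by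
  obtain ⟨x, hxU, hmax⟩ := hb.isCompact_closure.exists_isMaxOn hne.closure
    (hc.add (by fun_prop) : ContinuousOn (fun w => φ w + ε * ‖w‖ ^ 2) _)
  refine ⟨x, ⟨hxU, fun hx => ?_⟩, hmax⟩
  obtain ⟨r, hr, hball⟩ := nhds_basis_closedBall.mem_iff.1 (mem_interior_iff_mem_nhds.1 hx)
  have hsphere : sphere x |r| ⊆ closure U := by
    rw [abs_of_pos hr]
    exact sphere_subset_closedBall.trans (hball.trans subset_closure)
  have hφint : CircleIntegrable φ x r := (hc.mono hsphere).circleIntegrable'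
  have hstrict : φ x + ε * ‖x‖ ^ 2 < circleAverage (fun w => φ w + ε * ‖w‖ ^ 2) x r := by
    have hnorm : circleAverage (fun w => ε * ‖w‖ ^ 2) x r = ε * (‖x‖ ^ 2 + r ^ 2) := by
      rw [← circleAverage_norm_sq]
      exact circleAverage_fun_smul (a := ε) (f := fun w => ‖w‖ ^ 2)
    rw [circleAverage_fun_add hφint (by fun_prop), hnorm]
    nlinarith [mul_pos hε (pow_pos hr 2), hφ x (interior_subset hx) r hr hball]
  have hle : circleAverage (fun w => φ w + ε * ‖w‖ ^ 2) x r ≤ φ x + ε * ‖x‖ ^ 2 :=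
    circleAverage_mono_on_of_le_circle (hφint.add (by fun_prop)) fun w hw => hmax (hsphere hw)
  exact hstrict.not_ge hle

theorem nonpos_of_forall_frontier_nonpos (hφ : SubMeanValueOn φ U) (hb : Bornology.IsBounded U)
    (hc : ContinuousOn φ (closure U)) (hfr : ∀ w ∈ frontier U, φ w ≤ 0) {z : ℂ} (hz : z ∈ U) :
    φ z ≤ 0 := by
  obtain ⟨R, hR⟩ := hb.closure.exists_norm_le
  have hle : ∀ ε > 0, φ z ≤ ε * R ^ 2 := by
    intro ε hε
    obtain ⟨x, hx, hmax⟩ := hφ.exists_mem_frontier_isMaxOn hb hc ⟨z, hz⟩ hε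
    have hxR : ‖x‖ ^ 2 ≤ R ^ 2 := pow_le_pow_left₀ (norm_nonneg x) (hR x hx.1) 2
    have hzx : φ z + ε * ‖z‖ ^ 2 ≤ φ x + ε * ‖x‖ ^ 2 := hmax (subset_closure hz)
    nlinarith [hfr x hx, sq_nonneg ‖z‖]
  have hlim : Filter.Tendsto (fun ε : ℝ => ε * R ^ 2) (nhdsWithin 0 (Set.Ioi 0)) (nhds 0) :=
    tendsto_nhdsWithin_of_tendsto_nhds ((continuous_mul_const (R ^ 2)).tendsto' 0 0 (zero_mul _))
  exact ge_of_tendsto hlim (eventually_nhdsWithin_of_forall hle)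

end SubMeanValueOn

theorem le_mul_one_add_rpow_neg_mul_rpow {a c θ θ₀ β : ℝ} (hc : 0 ≤ c) (hθ₀ : 0 < θ₀)
    (hβ : 0 ≤ β) (hnear : |θ| < θ₀ → a ≤ c * |θ| ^ β) (ha : a ≤ c) :
    a ≤ c * (1 + θ₀ ^ (-β)) * |θ| ^ β := by
  have hfar : 0 ≤ c * θ₀ ^ (-β) * |θ| ^ β := by positivity
  rcases lt_or_ge |θ| θ₀ with hθ | hθ
  · nlinarith [hnear hθ]
  · have hone : θ₀ ^ (-β) * θ₀ ^ β = 1 := by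
      rw [rpow_neg hθ₀.le, inv_mul_cancel₀ (rpow_pos_of_pos hθ₀ β).ne']
    have hmono : θ₀ ^ (-β) * θ₀ ^ β ≤ θ₀ ^ (-β) * |θ| ^ β := by gcongr
    nlinarith [rpow_nonneg (abs_nonneg θ) β]

theorem le_mul_norm_one_sub_rpow_of_mem_sphere {ψ : ℂ → ℝ} {θ₀ β c : ℝ} (hc : 0 ≤ c)
    (hθ₀ : 0 < θ₀) (hβ : 0 ≤ β)
    (harc : ∀ θ ∈ Set.Ioo (-θ₀) θ₀, ψ (Complex.exp (θ * Complex.I)) ≤ c * |θ| ^ β)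
    (hbd : ∀ θ ∈ Set.Icc (-π) π, ψ (Complex.exp (θ * Complex.I)) ≤ c) {w : ℂ}
    (hw : w ∈ sphere 0 1) :
    ψ w ≤ c * (1 + θ₀ ^ (-β)) * (π / 2) ^ β * ‖1 - w‖ ^ β := by
  set θ := Complex.arg w
  have hwθ : Complex.exp (θ * Complex.I) = w := by
    simpa [mem_sphere_zero_iff_norm.1 hw] using Complex.norm_mul_exp_arg_mul_I w
  have hθπ : |θ| ≤ π := Complex.abs_arg_le_pi w
  have hangle : ψ w ≤ c * (1 + θ₀ ^ (-β)) * |θ| ^ β := by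
    rw [← hwθ]
    exact le_mul_one_add_rpow_neg_mul_rpow hc hθ₀ hβ (fun h => harc θ (abs_lt.1 h))
      (hbd θ (abs_le.1 hθπ))
  have hθw : |θ| ≤ π / 2 * ‖1 - w‖ := by
    have h := mul_abs_le_norm_one_sub_exp hθπ
    rw [hwθ] at h
    calc |θ| = π / 2 * (2 / π * |θ|) := by field_simp
      _ ≤ π / 2 * ‖1 - w‖ := by gcongr
  calc ψ w ≤ c * (1 + θ₀ ^ (-β)) * |θ| ^ β := hangle
    _ ≤ c * (1 + θ₀ ^ (-β)) * (π / 2 * ‖1 - w‖) ^ β := by gcongr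
    _ = c * (1 + θ₀ ^ (-β)) * (π / 2) ^ β * ‖1 - w‖ ^ β := by
      rw [mul_rpow (by positivity) (norm_nonneg _)]; ring

theorem re_one_sub_nonneg_of_norm_le_one {w : ℂ} (hw : ‖w‖ ≤ 1) : 0 ≤ (1 - w).re := by
  rw [Complex.sub_re, Complex.one_re, sub_nonneg]
  exact (Complex.re_le_norm w).trans hw

theorem differentiableOn_one_sub_cpow (b : ℂ) :
    DifferentiableOn ℂ (fun w : ℂ => (1 - w) ^ b) (ball 0 1) := by
  intro w hw
  have hslit : 1 - w ∈ Complex.slitPlane := by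
    rw [sub_eq_add_neg]
    exact Complex.mem_slitPlane_of_norm_lt_one (by simpa using hw)
  exact (DifferentiableAt.cpow (by fun_prop) (differentiableAt_const b) hslit)
    |>.differentiableWithinAt

theorem continuousOn_one_sub_cpow {b : ℂ} (hb : 0 < b.re) :
    ContinuousOn (fun w : ℂ => (1 - w) ^ b) (closedBall 0 1) := by
  intro w hw
  have hre := re_one_sub_nonneg_of_norm_le_one (mem_closedBall_zero_iff.1 hw)
  exact ((Complex.continuousAt_cpow_const_of_re_pos (Or.inl hre) hb).comp
    (continuous_sub_left 1).continuousAt).continuousWithinAt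

/-- A boundary Hölder bound propagates to the interior for
subharmonic functions on the unit disc: if `ψ` is continuous on the closed unit
disc, satisfies the sub-mean value inequality on the open disc, is bounded by
`c |θ|^β` on the boundary arc `θ ∈ (-θ₀, θ₀)` and by `c` on the whole boundary,
then `ψ z ≤ C |1 - z|^β` on the open disc, with `C` depending only on
`(θ₀, β, c)`. -/
theorem stmt_1 (θ₀ β c : ℝ) (hθ₀ : θ₀ ∈ Set.Ioo 0 (π / 2))
    (hβ : β ∈ Set.Ioo (0 : ℝ) 1) (hc : 0 < c) :
    ∃ C > 0, ∀ ψ : ℂ → ℝ,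
      ContinuousOn ψ (closedBall (0 : ℂ) 1) →
      (∀ z ∈ ball (0 : ℂ) 1, ∀ r : ℝ, 0 < r → closedBall z r ⊆ ball (0 : ℂ) 1 →
        ψ z ≤ (1 / (2 * π)) * ∫ t in (0 : ℝ)..(2 * π),
          ψ (z + (r : ℂ) * Complex.exp (t * Complex.I))) →
      (∀ θ ∈ Set.Ioo (-θ₀) θ₀, ψ (Complex.exp (θ * Complex.I)) ≤ c * |θ| ^ β) →
      (∀ θ ∈ Set.Icc (-π) π, ψ (Complex.exp (θ * Complex.I)) ≤ c) →
      ∀ z ∈ ball (0 : ℂ) 1, ψ z ≤ C * ‖1 - z‖ ^ β := by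
  obtain ⟨hθ₀, -⟩ := hθ₀
  obtain ⟨hβ0, hβ1⟩ := hβ
  have hcos : 0 < cos (β * (π / 2)) :=
    cos_pos_of_mem_Ioo ⟨by nlinarith [pi_pos], by nlinarith [pi_pos]⟩
  set K := c * (1 + θ₀ ^ (-β)) * (π / 2) ^ β
  set C := K / cos (β * (π / 2))
  refine ⟨C, by positivity, fun ψ hψc hψsub harc hbd z hz => ?_⟩
  set u : ℂ → ℝ := fun w => ((1 - w) ^ (β : ℂ)).re
  have hsub : SubMeanValueOn (fun w => ψ w - C * u w) (ball 0 1) := by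
    refine SubMeanValueOn.sub_mul_re (fun z hz r hr hball => ?_)
      (hψc.mono ball_subset_closedBall) (differentiableOn_one_sub_cpow _) C
    simpa only [circleAverage_def, circleMap, smul_eq_mul, one_div] using hψsub z hz r hr hball
  have hcont : ContinuousOn (fun w => ψ w - C * u w) (closure (ball 0 1)) := by
    rw [closure_ball 0 one_ne_zero]
    exact hψc.sub (continuousOn_const.mul (Complex.continuous_re.comp_continuousOn
      (continuousOn_one_sub_cpow (by simpa using hβ0))))
  have hfr : ∀ w ∈ frontier (ball (0 : ℂ) 1), ψ w - C * u w ≤ 0 := by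
    rw [frontier_ball 0 one_ne_zero]
    intro w hw
    have hψw := le_mul_norm_one_sub_rpow_of_mem_sphere hc.le hθ₀ hβ0.le harc hbd hw
    have hu := cos_mul_rpow_le_re_cpow hβ0.le (by linarith)
      (re_one_sub_nonneg_of_norm_le_one (mem_sphere_zero_iff_norm.1 hw).le)
    rw [sub_nonpos, div_mul_eq_mul_div, le_div_iff₀ hcos]
    nlinarith [mul_le_mul_of_nonneg_left hu (by positivity : 0 ≤ K)]
  have hψu := hsub.nonpos_of_forall_frontier_nonpos isBounded_ball hcont hfr hz
  calc ψ z ≤ C * u z := by linarith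
    _ ≤ C * ‖1 - z‖ ^ β := by gcongr; exact re_cpow_le_rpow _ _
end

section
/- Let u : ℂ → ℝ be smooth on the closed unit disc 𝔻̄ (all partial derivatives extend continuously to 𝔻̄) and harmonic on the open unit disc 𝔻, i.e. ∂²u/∂x² + ∂²u/∂y² = 0 on 𝔻 writing z = x + iy. Assume u(e^{iθ}) = 0 for every θ ∈ [−π/2, π/2]. Then at the boundary point 1 one has ∂_y u(1) = 0, ∂²_y u(1) = ∂_x u(1), and ∂²_x u(1) = −∂_x u(1), where all partial derivatives at 1 are taken within 𝔻̄. -/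
open Metric Real

/-- Partial derivative of `u : ℂ → ℝ` in the direction `v`, taken within the
closed unit disc. -/
noncomputable def pdW (v : ℂ) (u : ℂ → ℝ) : ℂ → ℝ :=
  fun z => fderivWithin ℝ u (Metric.closedBall (0 : ℂ) 1) z v

/-- Let `u : ℂ → ℝ` be smooth on the closed unit disc and
harmonic on the open unit disc, vanishing on the boundary arc `∂⁺𝔻`
(i.e. `u(e^{iθ}) = 0` for `θ ∈ [-π/2, π/2]`). Then at the boundary point `1`:
`∂_y u(1) = 0`, `∂²_y u(1) = ∂_x u(1)` and `∂²_x u(1) = -∂_x u(1)`,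
all derivatives taken within the closed disc. -/
theorem stmt_3 (u : ℂ → ℝ)
    (hu : ContDiffOn ℝ (⊤ : ℕ∞) u (Metric.closedBall (0 : ℂ) 1))
    (hharm : ∀ z ∈ Metric.ball (0 : ℂ) 1,
      pdW 1 (pdW 1 u) z + pdW Complex.I (pdW Complex.I u) z = 0)
    (hbd : ∀ θ ∈ Set.Icc (-(π / 2)) (π / 2), u (Complex.exp (θ * Complex.I)) = 0) :
    pdW Complex.I u 1 = 0 ∧
    pdW Complex.I (pdW Complex.I u) 1 = pdW 1 u 1 ∧
    pdW 1 (pdW 1 u) 1 = - pdW 1 u 1 := by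
  have hS : UniqueDiffOn ℝ (Metric.closedBall (0 : ℂ) 1) :=
    uniqueDiffOn_convex (convex_closedBall _ _)
      (by rw [interior_closedBall (0:ℂ) one_ne_zero]; exact ⟨0, by simp⟩)
  set S := Metric.closedBall (0 : ℂ) 1 with hSdef
  have h1S : (1 : ℂ) ∈ S := by simp [hSdef]
  set c : ℝ → ℂ := fun θ => Complex.exp (θ * Complex.I) with hcdef
  have hcmem : ∀ θ : ℝ, c θ ∈ S := by
    intro θ
    simp [hSdef, hcdef, mem_closedBall_zero_iff,
      Complex.norm_exp_ofReal_mul_I]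
  have hc0 : c 0 = 1 := by simp [hcdef]
  -- derivative of the circle curve
  have hcd : ∀ θ : ℝ, HasDerivAt c (c θ * Complex.I) θ := by
    intro θ
    have h1 : HasDerivAt (fun t : ℝ => (t : ℂ) * Complex.I) Complex.I θ := by
      simpa using (Complex.ofRealCLM.hasDerivAt (x := θ)).mul_const Complex.I
    simpa [hcdef, mul_comm] using h1.cexp
  set L : ℂ → (ℂ →L[ℝ] ℝ) := fun z => fderivWithin ℝ u S z with hLdef
  have hLc : ContDiffOn ℝ (⊤ : ℕ∞) L S := hu.fderivWithin hS (by simp)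
  have hLd : ∀ z ∈ S, HasFDerivWithinAt u (L z) S z :=
    fun z hz => (hu.differentiableOn (by simp) z hz).hasFDerivWithinAt
  set L2 : ℂ →L[ℝ] (ℂ →L[ℝ] ℝ) := fderivWithin ℝ L S 1 with hL2def
  have hL2d : HasFDerivWithinAt L L2 S 1 :=
    (hLc.differentiableOn (by simp) 1 h1S).hasFDerivWithinAt
  -- g = u ∘ c and its derivative h
  set g : ℝ → ℝ := fun θ => u (c θ) with hgdef
  set h : ℝ → ℝ := fun θ => L (c θ) (c θ * Complex.I) with hhdef
  have hgd : ∀ θ : ℝ, HasDerivAt g (h θ) θ := by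
    intro θ
    exact (hLd (c θ) (hcmem θ)).comp_hasDerivWithinAt θ (hcd θ).hasDerivWithinAt
      (fun t _ => hcmem t) |>.hasDerivAt Filter.univ_mem
  -- g vanishes near 0
  have hIoo : Set.Ioo (-(π/2)) (π/2) ∈ nhds (0:ℝ) :=
    Ioo_mem_nhds (neg_lt_zero.mpr (by positivity)) (by positivity)
  have hg0 : g =ᶠ[nhds (0:ℝ)] 0 := by
    filter_upwards [hIoo] with θ hθ
    exact hbd θ (Set.Ioo_subset_Icc_self hθ)
  -- first claim
  have claim1 : L 1 Complex.I = 0 := by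
    have h1 := hgd 0
    have h2 : HasDerivAt g 0 0 := (hasDerivAt_const (0:ℝ) (0:ℝ)).congr_of_eventuallyEq hg0
    have := h1.unique h2
    simpa [hhdef, hc0] using this
  -- h vanishes near 0
  have hh0 : h =ᶠ[nhds (0:ℝ)] 0 := by
    filter_upwards [eventually_eventually_nhds.mpr hg0] with θ hθ
    have : deriv g θ = 0 := by
      rw [Filter.EventuallyEq.deriv_eq hθ]; exact deriv_const θ 0
    rw [← (hgd θ).deriv]; exact this
  -- second derivative computation
  have hA : HasDerivAt (fun θ : ℝ => L (c θ)) (L2 Complex.I) 0 := by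
    have hL2d' : HasFDerivWithinAt L L2 S (c 0) := hc0 ▸ hL2d
    have := hL2d'.comp_hasDerivWithinAt 0 ((hcd 0).hasDerivWithinAt (s := Set.univ)) (fun t (_ : t ∈ Set.univ) => hcmem t)
    have h' := this.hasDerivAt Filter.univ_mem
    rw [hc0, one_mul] at h'
    exact h'
  have hb : HasDerivAt (fun θ : ℝ => c θ * Complex.I) (-1 : ℂ) 0 := by
    have := (hcd 0).mul_const Complex.I
    simpa [hc0, Complex.I_mul_I] using this
  have hhd : HasDerivAt h (L2 Complex.I Complex.I - L 1 1) 0 := by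
    have := hA.clm_apply hb
    simpa [hhdef, hc0, sub_eq_add_neg] using this
  have claim2' : L2 Complex.I Complex.I = L 1 1 := by
    have h2 : HasDerivAt h 0 0 := (hasDerivAt_const (0:ℝ) (0:ℝ)).congr_of_eventuallyEq hh0
    have := hhd.unique h2
    linarith [this]
  -- identify pdW I (pdW I u) 1 with L2 I I
  have hkey : ∀ v : ℂ, pdW v (pdW v u) 1 = L2 v v := by
    intro v
    have hfd : HasFDerivWithinAt (fun z => L z v)
        ((ContinuousLinearMap.apply ℝ ℝ v).comp L2) S 1 :=
      (ContinuousLinearMap.apply ℝ ℝ v).hasFDerivAt.comp_hasFDerivWithinAt 1 hL2d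
    have : fderivWithin ℝ (fun z => L z v) S 1 = (ContinuousLinearMap.apply ℝ ℝ v).comp L2 :=
      hfd.fderivWithin (hS 1 h1S)
    have hpd : pdW v u = fun z => L z v := rfl
    show fderivWithin ℝ (pdW v u) S 1 v = L2 v v
    rw [hpd, this]; rfl
  have claim2 : pdW Complex.I (pdW Complex.I u) 1 = pdW 1 u 1 := by
    rw [hkey Complex.I, claim2']; rfl
  -- third claim via continuity of the Laplacian
  have hsm : ∀ v : ℂ, ContDiffOn ℝ (⊤ : ℕ∞) (pdW v u) S :=
    fun v => (hu.fderivWithin hS (by simp)).clm_apply contDiffOn_const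
  have hsm2 : ∀ v w : ℂ, ContDiffOn ℝ (⊤ : ℕ∞) (pdW w (pdW v u)) S :=
    fun v w => ((hsm v).fderivWithin hS (by simp)).clm_apply contDiffOn_const
  set F : ℂ → ℝ := fun z => pdW 1 (pdW 1 u) z + pdW Complex.I (pdW Complex.I u) z with hFdef
  have hFcont : ContinuousOn F S :=
    ((hsm2 1 1).continuousOn).add ((hsm2 Complex.I Complex.I).continuousOn)
  have h1cl : (1 : ℂ) ∈ closure (Metric.ball (0:ℂ) 1) := by
    rw [closure_ball (0:ℂ) one_ne_zero]; exact h1S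
  have hne : (nhdsWithin (1:ℂ) (Metric.ball (0:ℂ) 1)).NeBot :=
    mem_closure_iff_nhdsWithin_neBot.mp h1cl
  have ht1 : Filter.Tendsto F (nhdsWithin (1:ℂ) (Metric.ball (0:ℂ) 1)) (nhds (F 1)) :=
    ((hFcont 1 h1S).mono ball_subset_closedBall).tendsto
  have ht2 : Filter.Tendsto F (nhdsWithin (1:ℂ) (Metric.ball (0:ℂ) 1)) (nhds 0) := by
    apply Filter.Tendsto.congr' _ tendsto_const_nhds
    filter_upwards [self_mem_nhdsWithin] with z hz
    exact (hharm z hz).symm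
  have hF1 : F 1 = 0 := tendsto_nhds_unique ht1 ht2
  refine ⟨?_, claim2, ?_⟩
  · exact claim1
  · have : pdW 1 (pdW 1 u) 1 + pdW Complex.I (pdW Complex.I u) 1 = 0 := hF1
    rw [claim2] at this; linarith
end

section
/- Let z̃ ∈ ℂ and let δ, γ ∈ (0,1] satisfy γ ≥ 2|z̃| and √γ/2 ≤ δ ≤ 2√γ. Then for every θ ∈ ℝ one has γ + (2 Im z̃ / (δ(2+δ))) θ + ((γ − Re z̃)/δ²) θ² ≥ 0. -/
theorem quadratic_nonneg_of_discrim_nonpos {K : Type*} [Field K] [LinearOrder K] [IsStrictOrderedRing K]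
    {a b c : K} (ha : 0 ≤ a) (hc : 0 ≤ c) (h : discrim a b c ≤ 0) (x : K) :
    0 ≤ a * (x * x) + b * x + c := by
  rcases ha.eq_or_lt with rfl | ha
  · have hb : b = 0 := by
      simp only [discrim, mul_zero, zero_mul, sub_zero] at h
      exact pow_eq_zero_iff two_ne_zero |>.mp (le_antisymm h (sq_nonneg b))
    simpa [hb] using hc
  · have hsq : 4 * a * (a * (x * x) + b * x + c) = (2 * a * x + b) ^ 2 - discrim a b c := by
      rw [discrim]; ring
    have : 0 ≤ 4 * a * (a * (x * x) + b * x + c) := by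
      rw [hsq]; nlinarith [sq_nonneg (2 * a * x + b)]
    exact nonneg_of_mul_nonneg_right (by linarith) (by positivity : (0 : K) < 4 * a)

theorem discrim_nonpos_of_le_half_of_sq_le {r i δ γ : ℝ} (hδ : 0 < δ) (hγ : 0 ≤ γ) (hr : r ≤ γ / 2)
    (hi : i ^ 2 ≤ γ ^ 2 / 4) :
    discrim ((γ - r) / δ ^ 2) (2 * i / (δ * (2 + δ))) γ ≤ 0 := by
  have hac : 4 * ((γ - r) / δ ^ 2) * γ = 4 * (γ - r) * γ / δ ^ 2 := by ring
  rw [discrim, div_pow, sub_nonpos, hac, div_le_div_iff₀ (by positivity) (by positivity)]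
  have key : i ^ 2 ≤ (γ - r) * γ * (2 + δ) ^ 2 := by
    have hsq : (1 : ℝ) ≤ (2 + δ) ^ 2 := by nlinarith
    have hγr : γ ^ 2 / 2 ≤ (γ - r) * γ := by nlinarith [mul_nonneg hγ (sub_nonneg.2 hr)]
    nlinarith [sq_nonneg γ]
  nlinarith [mul_le_mul_of_nonneg_left key (by positivity : (0 : ℝ) ≤ 4 * δ ^ 2)]

theorem stmt_15_general (zt : ℂ) (δ γ : ℝ) (hδ : δ ∈ Set.Ioc (0 : ℝ) 1)
    (h1 : 2 * ‖zt‖ ≤ γ) :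
    ∀ θ : ℝ, 0 ≤ γ + (2 * zt.im / (δ * (2 + δ))) * θ + ((γ - zt.re) / δ ^ 2) * θ ^ 2 := by
  intro θ
  have hre : zt.re ≤ γ / 2 := by linarith [Complex.re_le_norm zt]
  have him : zt.im ^ 2 ≤ γ ^ 2 / 4 := by
    have : |zt.im| ≤ γ / 2 := by linarith [Complex.abs_im_le_norm zt]
    nlinarith [sq_abs zt.im, abs_nonneg zt.im]
  have hγ : 0 ≤ γ := by linarith [norm_nonneg zt]
  have ha : 0 ≤ (γ - zt.re) / δ ^ 2 := div_nonneg (by linarith) (sq_nonneg δ)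
  have := quadratic_nonneg_of_discrim_nonpos ha hγ
    (discrim_nonpos_of_le_half_of_sq_le hδ.1 hγ hre him) θ
  linarith [sq θ]

/-- Nonnegativity of the quadratic `f̃₁(θ)` from the
construction of analytic discs partly attached to `ℝ⁺`: if `δ, γ ∈ (0,1]`,
`γ ≥ 2|z̃|` and `√γ/2 ≤ δ ≤ 2√γ`, then for all real `θ`,
`γ + (2 Im z̃ / (δ(2+δ))) θ + ((γ − Re z̃)/δ²) θ² ≥ 0`. -/
theorem stmt_15 (zt : ℂ) (δ γ : ℝ) (hδ : δ ∈ Set.Ioc (0 : ℝ) 1)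
    (hγ : γ ∈ Set.Ioc (0 : ℝ) 1)
    (h1 : 2 * ‖zt‖ ≤ γ)
    (h2 : Real.sqrt γ / 2 ≤ δ) (h3 : δ ≤ 2 * Real.sqrt γ) :
    ∀ θ : ℝ, 0 ≤ γ + (2 * zt.im / (δ * (2 + δ))) * θ + ((γ - zt.re) / δ ^ 2) * θ ^ 2 :=
  stmt_15_general zt δ γ hδ h1
end

section
/- Let u : ℂ → ℝ be smooth on the closed unit disc 𝔻̄ (all partial derivatives extend continuously to 𝔻̄) and harmonic on the open unit disc 𝔻, i.e. ∂²u/∂x² + ∂²u/∂y² = 0 on 𝔻 writing z = x + iy. Assume u(e^{iθ}) = 0 for every θ ∈ [−π/2, π/2]. Then there exists a continuous function g₁ : [0,1] → ℝ with |g₁(s)| ≤ ‖u‖_{C³(𝔻̄)} for all s ∈ [0,1], such that u(1 − s) = −s ∂ₓu(1) − (s²/2) ∂ₓu(1) + s³ g₁(s) for every s ∈ [0,1]. -/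
open Metric Real

/-- The `C^k` norm of `g` on a set `s`: the supremum over `s` of the norms of
the iterated derivatives (within `s`) of `g` of all orders up to `k`. -/
noncomputable def CkNormOn {E F : Type*} [NormedAddCommGroup E] [NormedSpace ℝ E]
    [NormedAddCommGroup F] [NormedSpace ℝ F] (k : ℕ) (s : Set E) (g : E → F) : ℝ :=
  ⨆ p : s × Fin (k + 1), ‖iteratedFDerivWithin ℝ (p.2 : ℕ) g s (p.1 : E)‖

section Aux

open Complex Set intervalIntegral

lemma stmt16_uS : UniqueDiffOn ℝ (Metric.closedBall (0 : ℂ) 1) :=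
  uniqueDiffOn_convex (convex_closedBall _ _)
    (by rw [interior_closedBall (0 : ℂ) one_ne_zero]; exact Metric.nonempty_ball.2 one_pos)

lemma stmt16_memS {z : ℂ} (h : ‖z‖ ≤ 1) : z ∈ Metric.closedBall (0 : ℂ) 1 := by
  simpa [Metric.mem_closedBall, dist_zero_right] using h

lemma stmt16_phi_mem {t : ℝ} (ht : t ∈ Set.Icc (0 : ℝ) 1) :
    ((1 - t : ℝ) : ℂ) ∈ Metric.closedBall (0 : ℂ) 1 := by
  apply stmt16_memS
  rw [Complex.norm_real, Real.norm_eq_abs, abs_le]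
  constructor <;> [linarith [ht.2]; linarith [ht.1]]

lemma stmt16_phi_deriv (t : ℝ) : HasDerivAt (fun t : ℝ => ((1 - t : ℝ) : ℂ)) (-1 : ℂ) t := by
  have h : HasDerivAt (fun t : ℝ => 1 - t) (-1) t := (hasDerivAt_id t).const_sub 1
  simpa using h.ofReal_comp

noncomputable instance stmt16_inst3 : NormedAddCommGroup (ℂ →L[ℝ] (ℂ →L[ℝ] (ℂ →L[ℝ] ℝ))) :=
  ContinuousLinearMap.toNormedAddCommGroup (𝕜 := ℝ) (𝕜₂ := ℝ) (σ₁₂ := RingHom.id ℝ) (E := ℂ) (F := ℂ →L[ℝ] (ℂ →L[ℝ] ℝ))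

noncomputable instance stmt16_inst3s : NormedSpace ℝ (ℂ →L[ℝ] (ℂ →L[ℝ] (ℂ →L[ℝ] ℝ))) :=
  ContinuousLinearMap.toNormedSpace (𝕜 := ℝ) (𝕜₂ := ℝ) (σ₁₂ := RingHom.id ℝ) (E := ℂ) (F := ℂ →L[ℝ] (ℂ →L[ℝ] ℝ))

end Aux

set_option maxHeartbeats 4000000 in
/-- Taylor expansion along the radius for a function `u`
smooth on the closed unit disc, harmonic on the open disc and vanishing on
`∂⁺𝔻`: there is a continuous `g₁ : [0,1] → ℝ` with `|g₁| ≤ ‖u‖_{C³(𝔻̄)}` such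
that `u(1-s) = -s ∂ₓu(1) - (s²/2) ∂ₓu(1) + s³ g₁(s)` for `s ∈ [0,1]`. -/
theorem stmt_16 (u : ℂ → ℝ)
    (hu : ContDiffOn ℝ (⊤ : ℕ∞) u (Metric.closedBall (0 : ℂ) 1))
    (hharm : ∀ z ∈ Metric.ball (0 : ℂ) 1,
      pdW 1 (pdW 1 u) z + pdW Complex.I (pdW Complex.I u) z = 0)
    (hbd : ∀ θ ∈ Set.Icc (-(π / 2)) (π / 2), u (Complex.exp (θ * Complex.I)) = 0) :
    ∃ g₁ : ℝ → ℝ, ContinuousOn g₁ (Set.Icc 0 1) ∧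
      (∀ s ∈ Set.Icc (0 : ℝ) 1, |g₁ s| ≤ CkNormOn 3 (Metric.closedBall (0 : ℂ) 1) u) ∧
      ∀ s ∈ Set.Icc (0 : ℝ) 1,
        u (((1 - s : ℝ) : ℂ)) =
          -s * pdW 1 u 1 - (s ^ 2 / 2) * pdW 1 u 1 + s ^ 3 * g₁ s := by
  classical
  unfold pdW at hharm ⊢
  set S : Set ℂ := Metric.closedBall (0 : ℂ) 1 with hS_def
  have uS : UniqueDiffOn ℝ S := stmt16_uS
  set F : ℂ → ℂ →L[ℝ] ℝ := fderivWithin ℝ u S with hF_def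
  set F2 : ℂ → ℂ →L[ℝ] (ℂ →L[ℝ] ℝ) := fderivWithin ℝ F S with hF2_def
  set F3 : ℂ → ℂ →L[ℝ] (ℂ →L[ℝ] (ℂ →L[ℝ] ℝ)) := fderivWithin ℝ F2 S with hF3_def
  have hF : ContDiffOn ℝ (⊤ : ℕ∞) F S := hu.fderivWithin uS (by simp)
  have hF2 : ContDiffOn ℝ (⊤ : ℕ∞) F2 S := hF.fderivWithin uS (by simp)
  have hud : DifferentiableOn ℝ u S := hu.differentiableOn (by simp)
  have hFd : DifferentiableOn ℝ F S := hF.differentiableOn (by simp)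
  have hF2d : DifferentiableOn ℝ F2 S := hF2.differentiableOn (by simp)
  have hF2c : ContinuousOn F2 S := hF.continuousOn_fderivWithin uS (by simp)
  have hF3c : ContinuousOn F3 S := hF2.continuousOn_fderivWithin uS (by simp)
  have h1S : (1 : ℂ) ∈ S := stmt16_memS (by norm_num)
  -- second nested derivative in direction v
  have L2 : ∀ (v : ℂ), ∀ z ∈ S,
      fderivWithin ℝ (fun w => F w v) S z v = F2 z v v := by
    intro v z hz
    rw [fderivWithin_clm_apply (uS z hz) (hFd z hz) (differentiableWithinAt_const v)]
    simp [fderivWithin_const_apply]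
    rfl
  -- third nested derivative in direction 1
  have hG2d : ∀ z ∈ S, DifferentiableWithinAt ℝ (fun w => F2 w 1) S z := fun z hz =>
    (hF2d z hz).clm_apply (differentiableWithinAt_const 1)
  have hG2der : ∀ z ∈ S,
      fderivWithin ℝ (fun w => F2 w 1) S z = (F3 z).flip 1 := by
    intro z hz
    rw [fderivWithin_clm_apply (uS z hz) (hF2d z hz) (differentiableWithinAt_const 1)]
    ext w
    simp [fderivWithin_const_apply]
    rfl
  have L3 : ∀ z ∈ S,
      fderivWithin ℝ (fun w => fderivWithin ℝ (fun w' => F w' 1) S w 1) S z 1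
        = F3 z 1 1 1 := by
    intro z hz
    have e2 : Set.EqOn (fun w => fderivWithin ℝ (fun w' => F w' 1) S w 1)
        (fun w => F2 w 1 1) S := fun w hw => L2 1 w hw
    rw [fderivWithin_congr e2 (e2 hz)]
    rw [fderivWithin_clm_apply (uS z hz) (hG2d z hz) (differentiableWithinAt_const 1)]
    rw [hG2der z hz]
    simp [fderivWithin_const_apply]
  -- harmonicity at the boundary point 1
  have hball : ∀ z ∈ Metric.ball (0 : ℂ) 1, F2 z 1 1 + F2 z Complex.I Complex.I = 0 := by
    intro z hz
    have hzS : z ∈ S := Metric.ball_subset_closedBall hz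
    rw [← L2 1 z hzS, ← L2 Complex.I z hzS]
    exact hharm z hz
  have evalCont : ∀ v w : ℂ, ContinuousOn (fun z => F2 z v w) S := by
    intro v w
    have h1 : Continuous fun A : ℂ →L[ℝ] (ℂ →L[ℝ] ℝ) => A v w :=
      (ContinuousLinearMap.apply ℝ ℝ w).continuous.comp
        ((ContinuousLinearMap.apply ℝ (ℂ →L[ℝ] ℝ) v).continuous)
    exact h1.comp_continuousOn hF2c
  have hH1 : F2 1 1 1 + F2 1 Complex.I Complex.I = 0 := by
    have hnb : (nhdsWithin (1 : ℂ) (Metric.ball (0 : ℂ) 1)).NeBot := by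
      apply mem_closure_iff_nhdsWithin_neBot.1
      rw [closure_ball (0 : ℂ) one_ne_zero]
      exact h1S
    have t1 : Filter.Tendsto (fun z => F2 z 1 1 + F2 z Complex.I Complex.I)
        (nhdsWithin (1 : ℂ) (Metric.ball (0 : ℂ) 1))
        (nhds (F2 1 1 1 + F2 1 Complex.I Complex.I)) :=
      (((evalCont 1 1).add (evalCont Complex.I Complex.I)) 1 h1S).mono
        Metric.ball_subset_closedBall
    have t2 : Filter.Tendsto (fun z => F2 z 1 1 + F2 z Complex.I Complex.I)
        (nhdsWithin (1 : ℂ) (Metric.ball (0 : ℂ) 1)) (nhds 0) := by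
      refine Filter.Tendsto.congr' ?_ tendsto_const_nhds
      filter_upwards [self_mem_nhdsWithin] with z hz
      exact (hball z hz).symm
    exact tendsto_nhds_unique t1 t2
  -- tangential second derivative at 1
  have hπ : (0 : ℝ) < π / 2 := by positivity
  have hJ : UniqueDiffOn ℝ (Set.Icc (-(π / 2)) (π / 2)) := uniqueDiffOn_Icc (by linarith)
  have h0J : (0 : ℝ) ∈ Set.Icc (-(π / 2)) (π / 2) := ⟨by linarith, by linarith⟩
  have hceq : ∀ θ : ℝ, Complex.exp (θ * Complex.I)
      = ((Real.cos θ : ℝ) : ℂ) + ((Real.sin θ : ℝ) : ℂ) * Complex.I := by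
    intro θ
    rw [Complex.exp_mul_I, Complex.ofReal_cos, Complex.ofReal_sin]
  have hc' : ∀ θ : ℝ, HasDerivAt (fun θ : ℝ => Complex.exp (θ * Complex.I))
      (-((Real.sin θ : ℝ) : ℂ) + ((Real.cos θ : ℝ) : ℂ) * Complex.I) θ := by
    intro θ
    have h1 : HasDerivAt (fun θ : ℝ => ((Real.cos θ : ℝ) : ℂ))
        (((-Real.sin θ : ℝ) : ℂ)) θ := (Real.hasDerivAt_cos θ).ofReal_comp
    have h2 : HasDerivAt (fun θ : ℝ => ((Real.sin θ : ℝ) : ℂ) * Complex.I)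
        (((Real.cos θ : ℝ) : ℂ) * Complex.I) θ :=
      ((Real.hasDerivAt_sin θ).ofReal_comp).mul_const _
    have h3 : HasDerivAt (fun θ : ℝ => ((Real.cos θ : ℝ) : ℂ) + ((Real.sin θ : ℝ) : ℂ) * Complex.I) _ θ := h1.add h2
    have heq : (fun θ : ℝ => ((Real.cos θ : ℝ) : ℂ) + ((Real.sin θ : ℝ) : ℂ) * Complex.I)
        = fun θ : ℝ => Complex.exp (θ * Complex.I) := funext fun θ => (hceq θ).symm
    rw [heq] at h3
    convert h3 using 1
    push_cast
    ring
  have hcS : ∀ θ : ℝ, Complex.exp (θ * Complex.I) ∈ S := by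
    intro θ
    apply stmt16_memS
    rw [Complex.norm_exp_ofReal_mul_I]
  have hc0 : Complex.exp ((0 : ℝ) * Complex.I) = 1 := by
    norm_num
  have hu1 : u 1 = 0 := by
    have := hbd 0 h0J
    rwa [hc0] at this
  have hg0 : Set.EqOn
      (fun θ : ℝ => F (Complex.exp (θ * Complex.I))
        (-((Real.sin θ : ℝ) : ℂ) + ((Real.cos θ : ℝ) : ℂ) * Complex.I))
      (fun _ => (0 : ℝ)) (Set.Icc (-(π / 2)) (π / 2)) := by
    intro θ hθ
    have hdw : HasDerivWithinAt (u ∘ fun θ : ℝ => Complex.exp (θ * Complex.I))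
        (F (Complex.exp (θ * Complex.I))
          (-((Real.sin θ : ℝ) : ℂ) + ((Real.cos θ : ℝ) : ℂ) * Complex.I))
        (Set.Icc (-(π / 2)) (π / 2)) θ :=
      (hud _ (hcS θ)).hasFDerivWithinAt.comp_hasDerivWithinAt θ
        ((hc' θ).hasDerivWithinAt) (fun x _ => hcS x)
    have e1 := hdw.derivWithin (hJ θ hθ)
    have e2 : derivWithin (u ∘ fun θ : ℝ => Complex.exp (θ * Complex.I))
        (Set.Icc (-(π / 2)) (π / 2)) θ
        = derivWithin (fun _ => (0 : ℝ)) (Set.Icc (-(π / 2)) (π / 2)) θ :=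
      derivWithin_congr (fun x hx => hbd x hx) (hbd θ hθ)
    have : F (Complex.exp (θ * Complex.I))
        (-((Real.sin θ : ℝ) : ℂ) + ((Real.cos θ : ℝ) : ℂ) * Complex.I) = 0 := by
      rw [← e1, e2, derivWithin_fun_const, Pi.zero_apply]
    simpa using this
  have hTang : F2 1 Complex.I Complex.I = F 1 1 := by
    have hA : HasDerivWithinAt (fun θ : ℝ => F (Complex.exp (θ * Complex.I)))
        (F2 (Complex.exp ((0 : ℝ) * Complex.I))
          (-((Real.sin 0 : ℝ) : ℂ) + ((Real.cos 0 : ℝ) : ℂ) * Complex.I))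
        (Set.Icc (-(π / 2)) (π / 2)) 0 :=
      (hFd _ (hcS 0)).hasFDerivWithinAt.comp_hasDerivWithinAt 0
        ((hc' 0).hasDerivWithinAt) (fun x _ => hcS x)
    have hv : HasDerivWithinAt
        (fun θ : ℝ => -((Real.sin θ : ℝ) : ℂ) + ((Real.cos θ : ℝ) : ℂ) * Complex.I)
        (-((Real.cos 0 : ℝ) : ℂ) + ((-Real.sin 0 : ℝ) : ℂ) * Complex.I)
        (Set.Icc (-(π / 2)) (π / 2)) 0 := by
      have h1 : HasDerivAt (fun θ : ℝ => -((Real.sin θ : ℝ) : ℂ))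
          (-((Real.cos 0 : ℝ) : ℂ)) 0 := ((Real.hasDerivAt_sin 0).ofReal_comp).neg
      have h2 : HasDerivAt (fun θ : ℝ => ((Real.cos θ : ℝ) : ℂ) * Complex.I)
          (((-Real.sin 0 : ℝ) : ℂ) * Complex.I) 0 :=
        ((Real.hasDerivAt_cos 0).ofReal_comp).mul_const _
      exact (h1.add h2).hasDerivWithinAt
    have hg := hA.clm_apply hv
    have e1 := hg.derivWithin (hJ 0 h0J)
    have e0 : derivWithin
        (fun θ : ℝ => F (Complex.exp (θ * Complex.I))
          (-((Real.sin θ : ℝ) : ℂ) + ((Real.cos θ : ℝ) : ℂ) * Complex.I))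
        (Set.Icc (-(π / 2)) (π / 2)) 0 = 0 := by
      rw [derivWithin_congr hg0 (hg0 h0J), derivWithin_fun_const, Pi.zero_apply]
    have e2 := e1.symm.trans e0
    simp only [hc0, Complex.exp_zero, Real.sin_zero, Real.cos_zero, Complex.ofReal_zero, Complex.ofReal_one,
      Complex.ofReal_neg, neg_zero, zero_add, one_mul, zero_mul, add_zero, map_neg,
      map_add, map_zero] at e2
    linarith
  have hkey : F2 1 1 1 = -(F 1 1) := by
    rw [hTang] at hH1
    linarith
  -- norm bound infrastructure
  have hcomp : IsCompact S := isCompact_closedBall _ _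
  have hbnd : ∀ i : Fin 4, ∃ C, ∀ z ∈ S, ‖iteratedFDerivWithin ℝ (i : ℕ) u S z‖ ≤ C := fun i =>
    hcomp.exists_bound_of_continuousOn (hu.continuousOn_iteratedFDerivWithin (by exact_mod_cast le_top) uS)
  choose C hC using hbnd
  have hbdd : BddAbove (Set.range fun p : S × Fin 4 =>
      ‖iteratedFDerivWithin ℝ (p.2 : ℕ) u S (p.1 : ℂ)‖) := by
    refine ⟨Finset.univ.sup' Finset.univ_nonempty C, ?_⟩
    rintro x ⟨⟨⟨z, hz⟩, i⟩, rfl⟩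
    exact (hC i z hz).trans (Finset.le_sup' C (Finset.mem_univ i))
  have hM : ∀ z ∈ S, ‖iteratedFDerivWithin ℝ 3 u S z‖ ≤ CkNormOn 3 S u := by
    intro z hz
    have h := le_ciSup hbdd (⟨⟨z, hz⟩, (3 : Fin 4)⟩ : S × Fin 4)
    simpa [CkNormOn] using h
  have happ : ∀ z ∈ S, |F3 z 1 1 1| ≤ ‖iteratedFDerivWithin ℝ 3 u S z‖ := by
    intro z hz
    have e1 : iteratedFDerivWithin ℝ 3 u S z (fun _ => (1 : ℂ))
        = iteratedFDerivWithin ℝ 2 (fun y => fderivWithin ℝ u S y) S z (fun _ => 1) 1 :=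
      iteratedFDerivWithin_succ_apply_right (n := 2) uS hz _
    have e2 : iteratedFDerivWithin ℝ 2 (fun y => fderivWithin ℝ u S y) S z (fun _ => (1 : ℂ))
        = iteratedFDerivWithin ℝ 1
            (fun y => fderivWithin ℝ (fun y' => fderivWithin ℝ u S y') S y) S z (fun _ => 1) 1 :=
      iteratedFDerivWithin_succ_apply_right (n := 1) uS hz _
    have e3 : iteratedFDerivWithin ℝ 1
        (fun y => fderivWithin ℝ (fun y' => fderivWithin ℝ u S y') S y) S z (fun _ => (1 : ℂ))
        = F3 z 1 :=
      iteratedFDerivWithin_one_apply (uS z hz) _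
    have e : iteratedFDerivWithin ℝ 3 u S z (fun _ => (1 : ℂ)) = F3 z 1 1 1 := by
      rw [e1, e2, e3]
    calc |F3 z 1 1 1| = ‖iteratedFDerivWithin ℝ 3 u S z (fun _ => (1 : ℂ))‖ := by
          rw [e, Real.norm_eq_abs]
      _ ≤ ‖iteratedFDerivWithin ℝ 3 u S z‖ * ∏ _i : Fin 3, ‖(1 : ℂ)‖ :=
          ContinuousMultilinearMap.le_opNorm _ _
      _ = ‖iteratedFDerivWithin ℝ 3 u S z‖ := by simp
  -- the clamped third derivative along the radius
  set H : ℝ → ℝ := fun τ => -(F3 (((1 - max 0 (min τ 1) : ℝ) : ℂ)) 1 1 1) with hH_def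
  have hprojmem : ∀ τ : ℝ, max 0 (min τ 1) ∈ Set.Icc (0 : ℝ) 1 := fun τ =>
    ⟨le_max_left _ _, max_le (by norm_num) (min_le_right _ _)⟩
  have hHbound : ∀ τ : ℝ, |H τ| ≤ CkNormOn 3 S u := by
    intro τ
    rw [hH_def]
    simp only [abs_neg]
    exact (happ _ (stmt16_phi_mem (hprojmem τ))).trans (hM _ (stmt16_phi_mem (hprojmem τ)))
  have hM0 : 0 ≤ CkNormOn 3 S u := (abs_nonneg (H 0)).trans (hHbound 0)
  have hHcont : Continuous H := by
    have hc1 : Continuous fun τ : ℝ => ((1 - max 0 (min τ 1) : ℝ) : ℂ) := by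
      apply Complex.continuous_ofReal.comp
      exact continuous_const.sub (continuous_const.max (continuous_id.min continuous_const))
    have hmaps : ∀ τ : ℝ, ((1 - max 0 (min τ 1) : ℝ) : ℂ) ∈ S := fun τ =>
      stmt16_phi_mem (hprojmem τ)
    have h2 : Continuous fun A : ℂ →L[ℝ] (ℂ →L[ℝ] (ℂ →L[ℝ] ℝ)) => A 1 1 1 :=
      (ContinuousLinearMap.apply ℝ ℝ (1 : ℂ)).continuous.comp
        ((ContinuousLinearMap.apply ℝ (ℂ →L[ℝ] ℝ) (1 : ℂ)).continuous.comp
          ((ContinuousLinearMap.apply ℝ (ℂ →L[ℝ] (ℂ →L[ℝ] ℝ)) (1 : ℂ)).continuous))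
    exact ((h2.comp_continuousOn hF3c).comp_continuous hc1 hmaps).neg
  have hHD3 : ∀ t ∈ Set.Icc (0 : ℝ) 1, H t = -(F3 (((1 - t : ℝ) : ℂ)) 1 1 1) := by
    intro t ht
    have hproj : max 0 (min t 1) = t := by
      rw [min_eq_left ht.2, max_eq_right ht.1]
    simp only [hH_def, hproj]
  -- the radial function and its derivatives
  have hI : UniqueDiffOn ℝ (Set.Icc (0 : ℝ) 1) := uniqueDiffOn_Icc one_pos
  have hφS : Set.MapsTo (fun t : ℝ => ((1 - t : ℝ) : ℂ)) (Set.Icc (0 : ℝ) 1) S :=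
    fun t ht => stmt16_phi_mem ht
  have hfCn : ∀ n : ℕ, ContDiffOn ℝ n (fun t : ℝ => u (((1 - t : ℝ) : ℂ))) (Set.Icc (0 : ℝ) 1) := by
    intro n
    have hφC : ContDiff ℝ n fun t : ℝ => ((1 - t : ℝ) : ℂ) :=
      Complex.ofRealCLM.contDiff.comp (contDiff_const.sub contDiff_id)
    exact (hu.of_le (by exact_mod_cast le_top)).comp hφC.contDiffOn hφS
  have hD1 : ∀ t ∈ Set.Icc (0 : ℝ) 1, HasDerivWithinAt (fun t : ℝ => u (((1 - t : ℝ) : ℂ)))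
      (-(F (((1 - t : ℝ) : ℂ)) 1)) (Set.Icc (0 : ℝ) 1) t := by
    intro t ht
    have h := (hud _ (hφS ht)).hasFDerivWithinAt.comp_hasDerivWithinAt t
      ((stmt16_phi_deriv t).hasDerivWithinAt) hφS
    exact h.congr_deriv (map_neg _ _)
  have hD2 : ∀ t ∈ Set.Icc (0 : ℝ) 1, HasDerivWithinAt
      (fun t : ℝ => -(F (((1 - t : ℝ) : ℂ)) 1))
      (F2 (((1 - t : ℝ) : ℂ)) 1 1) (Set.Icc (0 : ℝ) 1) t := by
    intro t ht
    have hA : HasDerivWithinAt (fun x : ℝ => F (((1 - x : ℝ) : ℂ)))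
        (F2 (((1 - t : ℝ) : ℂ)) (-1)) (Set.Icc (0 : ℝ) 1) t :=
      (hFd _ (hφS ht)).hasFDerivWithinAt.comp_hasDerivWithinAt t
        ((stmt16_phi_deriv t).hasDerivWithinAt) hφS
    have h := (hA.clm_apply (hasDerivWithinAt_const t _ (1 : ℂ))).neg
    exact h.congr_deriv (by simp)
  have hD3 : ∀ t ∈ Set.Icc (0 : ℝ) 1, HasDerivWithinAt
      (fun t : ℝ => F2 (((1 - t : ℝ) : ℂ)) 1 1)
      (-(F3 (((1 - t : ℝ) : ℂ)) 1 1 1)) (Set.Icc (0 : ℝ) 1) t := by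
    intro t ht
    have hB : HasDerivWithinAt (fun x : ℝ => F2 (((1 - x : ℝ) : ℂ)))
        (F3 (((1 - t : ℝ) : ℂ)) (-1)) (Set.Icc (0 : ℝ) 1) t :=
      (hF2d _ (hφS ht)).hasFDerivWithinAt.comp_hasDerivWithinAt (l := F2) t
        ((stmt16_phi_deriv t).hasDerivWithinAt) hφS
    have hc1 := hB.clm_apply (hasDerivWithinAt_const t _ (1 : ℂ))
    have h := hc1.clm_apply (hasDerivWithinAt_const t _ (1 : ℂ))
    exact h.congr_deriv (by simp)
  have i1 : ∀ t ∈ Set.Icc (0 : ℝ) 1,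
      iteratedDerivWithin 1 (fun t : ℝ => u (((1 - t : ℝ) : ℂ))) (Set.Icc (0 : ℝ) 1) t
        = -(F (((1 - t : ℝ) : ℂ)) 1) := by
    intro t ht
    rw [iteratedDerivWithin_one]
    exact (hD1 t ht).derivWithin (hI t ht)
  have i2 : ∀ t ∈ Set.Icc (0 : ℝ) 1,
      iteratedDerivWithin 2 (fun t : ℝ => u (((1 - t : ℝ) : ℂ))) (Set.Icc (0 : ℝ) 1) t
        = F2 (((1 - t : ℝ) : ℂ)) 1 1 := by
    intro t ht
    have e : iteratedDerivWithin 2 (fun t : ℝ => u (((1 - t : ℝ) : ℂ))) (Set.Icc (0 : ℝ) 1) t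
        = derivWithin (iteratedDerivWithin 1 (fun t : ℝ => u (((1 - t : ℝ) : ℂ)))
            (Set.Icc (0 : ℝ) 1)) (Set.Icc (0 : ℝ) 1) t := congrFun iteratedDerivWithin_succ t
    rw [e, derivWithin_congr (fun x hx => i1 x hx) (i1 t ht)]
    exact (hD2 t ht).derivWithin (hI t ht)
  have i3 : ∀ t ∈ Set.Icc (0 : ℝ) 1,
      iteratedDerivWithin 3 (fun t : ℝ => u (((1 - t : ℝ) : ℂ))) (Set.Icc (0 : ℝ) 1) t
        = -(F3 (((1 - t : ℝ) : ℂ)) 1 1 1) := by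
    intro t ht
    have e : iteratedDerivWithin 3 (fun t : ℝ => u (((1 - t : ℝ) : ℂ))) (Set.Icc (0 : ℝ) 1) t
        = derivWithin (iteratedDerivWithin 2 (fun t : ℝ => u (((1 - t : ℝ) : ℂ)))
            (Set.Icc (0 : ℝ) 1)) (Set.Icc (0 : ℝ) 1) t := congrFun iteratedDerivWithin_succ t
    rw [e, derivWithin_congr (fun x hx => i2 x hx) (i2 t ht)]
    exact (hD3 t ht).derivWithin (hI t ht)
  -- the remainder function
  refine ⟨fun s => ∫ t in (0:ℝ)..1, (1 - t) ^ 2 / 2 * H (s * t), ?_, ?_, ?_⟩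
  · -- continuity
    have hk : Continuous (Function.uncurry fun s t : ℝ => (1 - t) ^ 2 / 2 * H (s * t)) := by
      apply Continuous.mul
      · exact (((continuous_const.sub continuous_snd).pow 2).div_const 2)
      · exact hHcont.comp (continuous_fst.mul continuous_snd)
    exact (intervalIntegral.continuous_parametric_intervalIntegral_of_continuous'
      (μ := MeasureTheory.volume) hk 0 1).continuousOn
  · -- bound
    intro s hs
    have hb : ∀ x ∈ Set.uIoc (0 : ℝ) 1,
        ‖(1 - x) ^ 2 / 2 * H (s * x)‖ ≤ CkNormOn 3 S u / 2 := by
      intro x hx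
      rw [Set.uIoc_of_le (by norm_num : (0:ℝ) ≤ 1)] at hx
      rw [Real.norm_eq_abs, abs_mul]
      have h1 : |(1 - x) ^ 2 / 2| ≤ 1 / 2 := by
        rw [abs_div, abs_of_nonneg (sq_nonneg (1 - x))]
        have : (1 - x) ^ 2 ≤ 1 := by nlinarith [hx.1, hx.2]
        norm_num
        linarith
      calc |(1 - x) ^ 2 / 2| * |H (s * x)| ≤ (1 / 2) * CkNormOn 3 S u := by
            apply mul_le_mul h1 (hHbound _) (abs_nonneg _) (by norm_num)
        _ = CkNormOn 3 S u / 2 := by ring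
    calc |∫ t in (0:ℝ)..1, (1 - t) ^ 2 / 2 * H (s * t)|
        ≤ CkNormOn 3 S u / 2 * |1 - 0| := by
          rw [← Real.norm_eq_abs]
          exact intervalIntegral.norm_integral_le_of_norm_le_const hb
      _ ≤ CkNormOn 3 S u := by rw [show |(1:ℝ) - 0| = 1 by norm_num]; linarith
  · -- the Taylor expansion
    intro s hs
    have hdiff3 : DifferentiableOn ℝ (iteratedDerivWithin 2
        (fun t : ℝ => u (((1 - t : ℝ) : ℂ))) (Set.Icc (0 : ℝ) 1)) (Set.Icc (0 : ℝ) 1) :=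
      (hfCn 3).differentiableOn_iteratedDerivWithin (by exact_mod_cast Nat.lt_succ_self 2) hI
    have hTder : ∀ t ∈ Set.Ioo (0 : ℝ) s, HasDerivWithinAt
        (fun y => taylorWithinEval (fun t : ℝ => u (((1 - t : ℝ) : ℂ))) 2
          (Set.Icc (0 : ℝ) 1) y s)
        ((((Nat.factorial 2 : ℕ) : ℝ)⁻¹ * (s - t) ^ 2) • iteratedDerivWithin 3
          (fun t : ℝ => u (((1 - t : ℝ) : ℂ))) (Set.Icc (0 : ℝ) 1) t) (Set.Ioi t) t := by
      intro t ht
      have htI : t ∈ Set.Icc (0 : ℝ) 1 := ⟨ht.1.le, ht.2.le.trans hs.2⟩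
      have h := hasDerivWithinAt_taylorWithinEval_at_Icc s one_pos htI (hfCn 2) hdiff3
      refine h.mono_of_mem_nhdsWithin ?_
      refine Filter.mem_of_superset (Ioc_mem_nhdsGT (lt_of_lt_of_le ht.2 hs.2)) ?_
      exact fun x hx => ⟨le_trans ht.1.le hx.1.le, hx.2⟩
    have hcont2 : ContinuousOn
        (fun y => taylorWithinEval (fun t : ℝ => u (((1 - t : ℝ) : ℂ))) 2
          (Set.Icc (0 : ℝ) 1) y s) (Set.Icc (0 : ℝ) s) :=
      (continuousOn_taylorWithinEval hI (hfCn 2)).mono (Set.Icc_subset_Icc le_rfl hs.2)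
    have heqint : Set.EqOn
        (fun t => (((Nat.factorial 2 : ℕ) : ℝ)⁻¹ * (s - t) ^ 2) • iteratedDerivWithin 3
          (fun t : ℝ => u (((1 - t : ℝ) : ℂ))) (Set.Icc (0 : ℝ) 1) t)
        (fun t => (s - t) ^ 2 / 2 * H t) (Set.uIcc 0 s) := by
      intro t ht
      rw [Set.uIcc_of_le hs.1] at ht
      have htI : t ∈ Set.Icc (0 : ℝ) 1 := ⟨ht.1, ht.2.trans hs.2⟩
      simp only [smul_eq_mul]
      rw [i3 t htI, hHD3 t htI,
        show ((Nat.factorial 2 : ℕ) : ℝ) = 2 by norm_num [Nat.factorial]]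
      ring
    have hint : IntervalIntegrable
        (fun t => (((Nat.factorial 2 : ℕ) : ℝ)⁻¹ * (s - t) ^ 2) • iteratedDerivWithin 3
          (fun t : ℝ => u (((1 - t : ℝ) : ℂ))) (Set.Icc (0 : ℝ) 1) t)
        MeasureTheory.volume 0 s := by
      apply ContinuousOn.intervalIntegrable
      apply ContinuousOn.congr (f := fun t => (s - t) ^ 2 / 2 * H t)
      · exact (Continuous.continuousOn (by
          exact (((continuous_const.sub continuous_id).pow 2).div_const 2).mul hHcont))
      · exact heqint
    have hFTC := intervalIntegral.integral_eq_sub_of_hasDeriv_right_of_le hs.1 hcont2 hTder hint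
    rw [taylorWithinEval_self] at hFTC
    have hsub1 : (∫ t in (0:ℝ)..s, (((Nat.factorial 2 : ℕ) : ℝ)⁻¹ * (s - t) ^ 2) • iteratedDerivWithin 3
          (fun t : ℝ => u (((1 - t : ℝ) : ℂ))) (Set.Icc (0 : ℝ) 1) t)
        = ∫ t in (0:ℝ)..s, (s - t) ^ 2 / 2 * H t := intervalIntegral.integral_congr heqint
    have hsub2 : (∫ t in (0:ℝ)..s, (s - t) ^ 2 / 2 * H t)
        = s ^ 3 * ∫ t in (0:ℝ)..1, (1 - t) ^ 2 / 2 * H (s * t) := by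
      have h2 := intervalIntegral.smul_integral_comp_mul_left
        (f := fun τ => (s - τ) ^ 2 / 2 * H τ) (a := 0) (b := 1) s
      rw [mul_zero, mul_one] at h2
      rw [← h2, smul_eq_mul]
      have h3 : (∫ t in (0:ℝ)..1, (s - s * t) ^ 2 / 2 * H (s * t))
          = ∫ t in (0:ℝ)..1, s ^ 2 * ((1 - t) ^ 2 / 2 * H (s * t)) := by
        apply intervalIntegral.integral_congr
        intro x _
        ring_nf
      rw [h3, intervalIntegral.integral_const_mul]
      ring
    have h0I : (0 : ℝ) ∈ Set.Icc (0 : ℝ) 1 := ⟨le_rfl, by norm_num⟩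
    have hφ0 : ((1 - (0:ℝ) : ℝ) : ℂ) = 1 := by norm_num
    have hf0 : u (((1 - (0:ℝ) : ℝ) : ℂ)) = 0 := by rw [hφ0]; exact hu1
    have hT0 : taylorWithinEval (fun t : ℝ => u (((1 - t : ℝ) : ℂ))) 2
        (Set.Icc (0 : ℝ) 1) 0 s = -(s * F 1 1) - s ^ 2 / 2 * F 1 1 := by
      rw [taylor_within_apply]
      rw [Finset.sum_range_succ, Finset.sum_range_succ, Finset.sum_range_one]
      rw [iteratedDerivWithin_zero, i1 0 h0I, i2 0 h0I, hφ0, hu1, hkey,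
        show ((Nat.factorial 0 : ℕ) : ℝ) = 1 by norm_num [Nat.factorial],
        show ((Nat.factorial 1 : ℕ) : ℝ) = 1 by norm_num [Nat.factorial],
        show ((Nat.factorial 2 : ℕ) : ℝ) = 2 by norm_num [Nat.factorial]]
      simp only [smul_eq_mul]
      ring
    have hmain : u (((1 - s : ℝ) : ℂ))
        - taylorWithinEval (fun t : ℝ => u (((1 - t : ℝ) : ℂ))) 2 (Set.Icc (0 : ℝ) 1) 0 s
        = s ^ 3 * ∫ t in (0:ℝ)..1, (1 - t) ^ 2 / 2 * H (s * t) := by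
      rw [← hsub2, ← hsub1, hFTC]
    rw [hT0] at hmain
    linarith [hmain]
end
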